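/- Assume (A1)-(A4), (B1), (B2) and (B4), and for u ∈ X⁺ let m(u) be the unique point of M with m(u)⁺ = u. Then: (iv) a sequence (uₙ) ⊂ X⁺ is a Palais–Smale sequence for J ∘ m (i.e. (J∘m)(uₙ) converges and (J∘m)'(uₙ) → 0) if and only if (m(uₙ)) is a Palais–Smale sequence for J contained in M; (v) u ∈ X⁺ is a critical point of J ∘ m if and only if m(u) is a critical point of J; (vi) if J is even then J ∘ m is even. -/

import Mathlib

open Filter Topology

noncomputable section

variable {H W : Type*} [NormedAddCommGroup H] [InnerProductSpace ℝ H] [CompleteSpace H]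
  [NormedAddCommGroup W] [NormedSpace ℝ W] [CompleteSpace W]

/-- `uₙ` T-converges to `l`: `uₙ⁺ → l⁺` in the norm of `H` and `ũₙ ⇀ l̃` weakly in `W`. -/
def TConv (u : ℕ → H × W) (l : H × W) : Prop :=
  Tendsto (fun n => (u n).1) atTop (𝓝 l.1) ∧
    ∀ φ : W →L[ℝ] ℝ, Tendsto (fun n => φ (u n).2) atTop (𝓝 (φ l.2))

/-- The Nehari–Pankov set
`N = {u ≠ 0 : J(u) > 0 and J'(u)[w] = 0 for all w ∈ ℝu + X̃}`. -/
def NehariPankov (J : H × W → ℝ) : Set (H × W) :=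
  {u | u ≠ 0 ∧ 0 < J u ∧ ∀ (s : ℝ) (v : W), fderiv ℝ J u (s • u + ((0 : H), v)) = 0}

/-- The natural constraint `M = {u : I'(u)[v] = 0 for all v ∈ X̃}`. -/
def NatConstraint (I : H × W → ℝ) : Set (H × W) :=
  {u | ∀ v : W, fderiv ℝ I u ((0 : H), v) = 0}

/-!
`I` attains its minimum over the fibre `{w : w.1 = u}` exactly at `m u` (by (B4)), so
`J ≤ J ∘ m` on that fibre. Coercivity (B1) bounds `m` along convergent sequences, weak
compactness in the reflexive space `W` gives a T-convergent subsequence, and (A2), (A3) with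
the strict minimality identify its limit as `m u` and upgrade to norm convergence: `m` is
continuous. The fibrewise inequality `J (m x + (y - x, 0)) ≤ J (m y)` squeezes every increment
of `J ∘ m` between two increments of `J`, so strict differentiability of `J` gives
`(J ∘ m)'(u) = J'(m u) ∘ inl`. As `J'(m u)` vanishes on `X̃`, this restriction has the same
norm as `J'(m u)` and vanishes iff `J'(m u)` does, which gives (iv) and (v). If `J` is even,
so is `I`, hence `M` is symmetric and `m (-u) = -m u` by uniqueness, which gives (vi).
-/

open Asymptotics TopologicalSpace

section Reflexive

variable {E : Type*} [NormedAddCommGroup E] [NormedSpace ℝ E]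

theorem Submodule.exists_strongDual_eq_zero_ne_zero_of_notMem (S : Submodule ℝ E)
    (hS : IsClosed (S : Set E)) {x : E} (hx : x ∉ S) :
    ∃ f : StrongDual ℝ E, (∀ y ∈ S, f y = 0) ∧ f x ≠ 0 := by
  obtain ⟨f, u, hfS, hux⟩ := geometric_hahn_banach_closed_point S.convex hS hx
  have hu : 0 < u := by simpa using hfS 0 S.zero_mem
  refine ⟨f, fun y hy => ?_, (hu.trans hux).ne'⟩
  by_contra hfy
  -- `f` is bounded above by `u` on `S`, but takes the value `u` at `(u / f y) • y ∈ S`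
  have := hfS _ (S.smul_mem (u / f y) hy)
  rw [map_smul, smul_eq_mul, div_mul_cancel₀ _ hfy] at this
  exact lt_irrefl _ this

theorem StrongDual.exists_norm_le_one_half_norm_le_apply (g : StrongDual ℝ E) :
    ∃ z : E, ‖z‖ ≤ 1 ∧ ‖g‖ / 2 ≤ g z := by
  rcases eq_or_ne g 0 with rfl | hg
  · exact ⟨0, by simp⟩
  obtain ⟨z, hz, hgz⟩ := g.exists_lt_apply_of_lt_opNorm (half_lt_self (norm_pos_iff.2 hg))
  rw [Real.norm_eq_abs] at hgz
  rcases le_or_gt 0 (g z) with hpos | hneg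
  · exact ⟨z, hz.le, by rw [abs_of_nonneg hpos] at hgz; exact hgz.le⟩
  · refine ⟨-z, by simpa using hz.le, ?_⟩
    rw [abs_of_neg hneg] at hgz
    rw [map_neg]
    exact hgz.le

theorem separableSpace_of_separableSpace_strongDual [SeparableSpace (StrongDual ℝ E)] :
    SeparableSpace E := by
  obtain ⟨d, hd⟩ := exists_dense_seq (StrongDual ℝ E)
  choose z hz1 hz2 using fun k => (d k).exists_norm_le_one_half_norm_le_apply
  set S := (Submodule.span ℝ (Set.range z)).topologicalClosure
  suffices hS : ∀ x, x ∈ S by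
    have hsep : IsSeparable (S : Set E) := (Set.countable_range z).isSeparable.span.closure
    rw [Set.eq_univ_of_forall hS] at hsep
    exact isSeparable_univ_iff.1 hsep
  intro x
  by_contra hx
  obtain ⟨f, hfS, hfx⟩ :=
    S.exists_strongDual_eq_zero_ne_zero_of_notMem (Submodule.isClosed_topologicalClosure _) hx
  have hf : 0 < ‖f‖ := norm_pos_iff.2 fun h => hfx (by simp [h])
  obtain ⟨k, hk⟩ := hd.exists_dist_lt f (by positivity : 0 < ‖f‖ / 4)
  rw [dist_eq_norm] at hk
  have hfz : f (z k) = 0 :=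
    hfS _ (Submodule.le_topologicalClosure _ (Submodule.subset_span ⟨k, rfl⟩))
  have hdk : ‖f‖ - ‖f‖ / 4 ≤ ‖d k‖ := by linarith [norm_sub_norm_le f (d k)]
  have hdkz : d k (z k) ≤ ‖f‖ / 4 :=
    calc d k (z k) = (d k - f) (z k) := by simp [hfz]
      _ ≤ ‖d k - f‖ * ‖z k‖ := (le_abs_self _).trans ((d k - f).le_opNorm _)
      _ ≤ ‖f‖ / 4 := by
        rw [norm_sub_rev]; nlinarith [hz1 k, norm_nonneg (f - d k), norm_nonneg (z k)]
  linarith [hz2 k]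

theorem Submodule.surjective_inclusionInDoubleDual_of_isClosed
    (hE : Function.Surjective (NormedSpace.inclusionInDoubleDual ℝ E))
    (Y : Submodule ℝ E) (hY : IsClosed (Y : Set E)) :
    Function.Surjective (NormedSpace.inclusionInDoubleDual ℝ Y) := by
  intro F
  obtain ⟨x, hx⟩ := hE (F.comp ((ContinuousLinearMap.compL ℝ Y E ℝ).flip Y.subtypeL))
  have hxF : ∀ φ : StrongDual ℝ E, φ x = F (φ.comp Y.subtypeL) := fun φ =>
    DFunLike.congr_fun hx φ
  have hxY : x ∈ Y := by
    by_contra hxY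
    obtain ⟨f, hfY, hfx⟩ := Y.exists_strongDual_eq_zero_ne_zero_of_notMem hY hxY
    have hf : f.comp Y.subtypeL = 0 := ContinuousLinearMap.ext fun y => hfY y y.2
    exact hfx (by rw [hxF, hf, map_zero])
  refine ⟨⟨x, hxY⟩, ContinuousLinearMap.ext fun g => ?_⟩
  obtain ⟨φ, hφ, -⟩ := exists_extension_norm_eq Y g
  obtain rfl : φ.comp Y.subtypeL = g := ContinuousLinearMap.ext hφ
  exact hxF φ

theorem exists_subseq_weakly_tendsto_of_separableSpace [SeparableSpace E]
    (hE : Function.Surjective (NormedSpace.inclusionInDoubleDual ℝ E))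
    {x : ℕ → E} {C : ℝ} (hC : ∀ n, ‖x n‖ ≤ C) :
    ∃ (ψ : ℕ → ℕ) (l : E), StrictMono ψ ∧
      ∀ φ : StrongDual ℝ E, Tendsto (fun n => φ (x (ψ n))) atTop (𝓝 (φ l)) := by
  have : SeparableSpace (StrongDual ℝ (StrongDual ℝ E)) :=
    hE.denseRange.separableSpace (NormedSpace.inclusionInDoubleDual ℝ E).continuous
  have := separableSpace_of_separableSpace_strongDual (E := StrongDual ℝ E)
  have hx : ∀ n, StrongDual.toWeakDual (NormedSpace.inclusionInDoubleDual ℝ E (x n)) ∈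
      WeakDual.toStrongDual ⁻¹' Metric.closedBall 0 C := fun n =>
    (mem_closedBall_zero_iff (E := StrongDual ℝ (StrongDual ℝ E))).2
      ((NormedSpace.double_dual_bound ℝ E (x n)).trans (hC n))
  obtain ⟨F, -, ψ, hψ, hψF⟩ := WeakDual.isSeqCompact_closedBall ℝ _ 0 C hx
  obtain ⟨l, hl⟩ := hE (WeakDual.toStrongDual F)
  refine ⟨ψ, l, hψ, fun φ => ?_⟩
  have hFl : F φ = φ l := (DFunLike.congr_fun hl φ).symm
  exact hFl ▸ ((WeakDual.eval_continuous φ).tendsto F).comp hψF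

theorem exists_subseq_weakly_tendsto
    (hE : Function.Surjective (NormedSpace.inclusionInDoubleDual ℝ E))
    {x : ℕ → E} {C : ℝ} (hC : ∀ n, ‖x n‖ ≤ C) :
    ∃ (ψ : ℕ → ℕ) (l : E), StrictMono ψ ∧
      ∀ φ : StrongDual ℝ E, Tendsto (fun n => φ (x (ψ n))) atTop (𝓝 (φ l)) := by
  set Y := (Submodule.span ℝ (Set.range x)).topologicalClosure
  have hxY : ∀ n, x n ∈ Y := fun n =>
    Submodule.le_topologicalClosure _ (Submodule.subset_span ⟨n, rfl⟩)
  have : SeparableSpace Y := (Set.countable_range x).isSeparable.span.closure.separableSpace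
  obtain ⟨ψ, l, hψ, hl⟩ := exists_subseq_weakly_tendsto_of_separableSpace
    (Y.surjective_inclusionInDoubleDual_of_isClosed hE (Submodule.isClosed_topologicalClosure _))
    (x := fun n => ⟨x n, hxY n⟩) hC
  exact ⟨ψ, l, hψ, fun φ => hl (φ.comp Y.subtypeL)⟩

end Reflexive

section Prod

variable {𝕜 E F G : Type*} [NontriviallyNormedField 𝕜] [NormedAddCommGroup E] [NormedSpace 𝕜 E]
  [NormedAddCommGroup F] [NormedSpace 𝕜 F] [NormedAddCommGroup G] [NormedSpace 𝕜 G]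

namespace ContinuousLinearMap

variable (f : E × F →L[𝕜] G)

theorem comp_inl_comp_fst_of_apply_inr (hf : ∀ v, f (0, v) = 0) :
    (f.comp (inl 𝕜 E F)).comp (fst 𝕜 E F) = f := by
  ext p
  · simp
  · simp [hf]

theorem norm_comp_inl_of_apply_inr (hf : ∀ v, f (0, v) = 0) : ‖f.comp (inl 𝕜 E F)‖ = ‖f‖ := by
  refine le_antisymm ?_ ?_
  · calc ‖f.comp (inl 𝕜 E F)‖ ≤ ‖f‖ * ‖inl 𝕜 E F‖ := opNorm_comp_le _ _
      _ ≤ ‖f‖ := mul_le_of_le_one_right (norm_nonneg f) (norm_inl_le_one 𝕜 E F)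
  · conv_lhs => rw [← f.comp_inl_comp_fst_of_apply_inr hf]
    calc _ ≤ ‖f.comp (inl 𝕜 E F)‖ * ‖fst 𝕜 E F‖ := opNorm_comp_le _ _
      _ ≤ ‖f.comp (inl 𝕜 E F)‖ := mul_le_of_le_one_right (norm_nonneg _) (norm_fst_le 𝕜 E F)

theorem comp_inl_eq_zero_iff_of_apply_inr (hf : ∀ v, f (0, v) = 0) :
    f.comp (inl 𝕜 E F) = 0 ↔ f = 0 := by
  refine ⟨fun h => ?_, fun h => by rw [h, zero_comp]⟩
  rw [← f.comp_inl_comp_fst_of_apply_inr hf, h, zero_comp]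

end ContinuousLinearMap

end Prod

section Sandwich

variable {E F : Type*} [NormedAddCommGroup E] [NormedSpace ℝ E]
  [NormedAddCommGroup F] [NormedSpace ℝ F]

theorem HasStrictFDerivAt.hasFDerivAt_comp_of_le {f : F → ℝ} {f' : F →L[ℝ] ℝ} {p : E → F}
    {L : E →L[ℝ] F} {u : E} (hf : HasStrictFDerivAt f f' (p u)) (hp : ContinuousAt p u)
    (hle : ∀ x y, f (p x + L (y - x)) ≤ f (p y)) :
    HasFDerivAt (f ∘ p) (f'.comp L) u := by
  rw [hasFDerivAt_iff_isLittleO_nhds_zero]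
  set R : F × F → ℝ := fun q => f q.1 - f q.2 - f' (q.1 - q.2)
  have hR : R =o[𝓝 (p u, p u)] fun q => q.1 - q.2 := hf.isLittleO
  have hpu : Tendsto (fun h => p (u + h)) (𝓝 0) (𝓝 (p u)) :=
    hp.tendsto.comp (by simpa using (continuous_const_add u).tendsto (0 : E))
  have hL : Tendsto (fun h => L h) (𝓝 0) (𝓝 0) := by simpa using L.continuous.tendsto 0
  have hlow : (fun h => R (p u + L h, p u)) =o[𝓝 0] fun h => h := by
    have hpL : Tendsto (fun h => p u + L h) (𝓝 0) (𝓝 (p u)) := by simpa using hL.const_add (p u)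
    have := hR.comp_tendsto (hpL.prodMk_nhds tendsto_const_nhds)
    simp only [Function.comp_def, add_sub_cancel_left] at this
    exact this.trans_isBigO (L.isBigO_id _)
  have hupp : (fun h => R (p (u + h), p (u + h) - L h)) =o[𝓝 0] fun h => h := by
    have hpL : Tendsto (fun h => p (u + h) - L h) (𝓝 0) (𝓝 (p u)) := by simpa using hpu.sub hL
    have := hR.comp_tendsto (hpu.prodMk_nhds hpL)
    simp only [Function.comp_def, sub_sub_cancel] at this
    exact this.trans_isBigO (L.isBigO_id _)
  refine (isBigO_of_le _ fun h => ?_).trans_isLittleO (hlow.norm_left.add hupp.norm_left)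
  -- `hle` squeezes the increment of `f ∘ p` between the two remainders
  have h₁ := hle u (u + h)
  have h₂ := hle (u + h) u
  simp only [add_sub_cancel_left, sub_add_cancel_left, map_neg, ← sub_eq_add_neg] at h₁ h₂
  simp only [R, Function.comp_apply, ContinuousLinearMap.comp_apply, add_sub_cancel_left,
    sub_sub_cancel, Real.norm_eq_abs]
  rw [abs_le, abs_of_nonneg (by positivity)]
  constructor
  · linarith [neg_abs_le (f (p u + L h) - f (p u) - f' (L h)),
      abs_nonneg (f (p (u + h)) - f (p (u + h) - L h) - f' (L h))]
  · linarith [le_abs_self (f (p (u + h)) - f (p (u + h) - L h) - f' (L h)),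
      abs_nonneg (f (p u + L h) - f (p u) - f' (L h))]

end Sandwich

theorem exists_norm_le_of_tendsto_atTop_of_le {X : Type*} [SeminormedAddCommGroup X]
    {g : X → ℝ} (hg : ∀ u : ℕ → X, Tendsto (fun n => ‖u n‖) atTop atTop →
      Tendsto (fun n => g (u n)) atTop atTop)
    {w : ℕ → X} {B : ℝ} (hw : ∀ n, g (w n) ≤ B) : ∃ C, ∀ n, ‖w n‖ ≤ C := by
  by_contra! hunb
  choose k hk using hunb
  have hnorm : Tendsto (fun n : ℕ => ‖w (k n)‖) atTop atTop :=
    tendsto_atTop_mono (fun n => (hk n).le) tendsto_natCast_atTop_atTop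
  obtain ⟨n, hn⟩ := ((hg _ hnorm).eventually_gt_atTop B).exists
  exact (hn.trans_le (hw (k n))).false

theorem tendsto_of_le_liminf_of_le_tendsto {x a : ℕ → ℝ} {c A : ℝ}
    (hbdd : IsBoundedUnder (· ≥ ·) atTop x) (hxa : ∀ n, x n ≤ a n)
    (ha : Tendsto a atTop (𝓝 A)) (hc : c ≤ liminf x atTop) (hAc : A ≤ c) :
    Tendsto x atTop (𝓝 c) := by
  refine tendsto_of_le_liminf_of_limsup_le hc ?_
    (ha.isBoundedUnder_le.mono_le (.of_forall hxa)) hbdd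
  calc limsup x atTop ≤ limsup a atTop :=
        limsup_le_limsup (.of_forall hxa) hbdd.isCoboundedUnder_le ha.isBoundedUnder_le
    _ = A := ha.limsup_eq
    _ ≤ c := hAc

section NatConstraint

variable {E F : Type*} [NormedAddCommGroup E] [InnerProductSpace ℝ E]
  [NormedAddCommGroup F] [NormedSpace ℝ F] {I : E × F → ℝ}

theorem lt_of_ne_of_mem_natConstraint
    (hB4 : ∀ u ∈ NatConstraint I, ∀ v : F, v ≠ 0 → I u < I (u + ((0 : E), v)))
    {w₀ w : E × F} (hw₀ : w₀ ∈ NatConstraint I) (hfst : w.1 = w₀.1) (hne : w ≠ w₀) :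
    I w₀ < I w := by
  have hv : w.2 - w₀.2 ≠ 0 := sub_ne_zero.2 fun h => hne (Prod.ext hfst h)
  have hw : w₀ + ((0 : E), w.2 - w₀.2) = w := Prod.ext (by simp [hfst]) (by simp)
  exact hw ▸ hB4 w₀ hw₀ _ hv

theorem le_of_mem_natConstraint
    (hB4 : ∀ u ∈ NatConstraint I, ∀ v : F, v ≠ 0 → I u < I (u + ((0 : E), v)))
    {w₀ w : E × F} (hw₀ : w₀ ∈ NatConstraint I) (hfst : w.1 = w₀.1) : I w₀ ≤ I w := by
  rcases eq_or_ne w w₀ with rfl | hne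
  · exact le_rfl
  · exact (lt_of_ne_of_mem_natConstraint hB4 hw₀ hfst hne).le

theorem le_of_mem_natConstraint_of_eq_half_norm_sq_sub {J : E × F → ℝ}
    (hJ : ∀ u, J u = 1 / 2 * ‖u.1‖ ^ 2 - I u)
    (hB4 : ∀ u ∈ NatConstraint I, ∀ v : F, v ≠ 0 → I u < I (u + ((0 : E), v)))
    {w₀ w : E × F} (hw₀ : w₀ ∈ NatConstraint I) (hfst : w.1 = w₀.1) : J w ≤ J w₀ := by
  rw [hJ, hJ, hfst]
  linarith [le_of_mem_natConstraint hB4 hw₀ hfst]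

theorem neg_mem_natConstraint (heven : ∀ w, I (-w) = I w) {w : E × F}
    (hI : DifferentiableAt ℝ I (-w)) (hw : w ∈ NatConstraint I) : -w ∈ NatConstraint I := by
  have hcomp : HasFDerivAt (fun u => I (-u))
      ((fderiv ℝ I (-w)).comp (-ContinuousLinearMap.id ℝ _)) w :=
    hI.hasFDerivAt.comp w (hasFDerivAt_id w).neg
  simp only [heven] at hcomp
  intro v
  simpa [hcomp.fderiv] using hw v

theorem fderiv_apply_inr_eq_zero_of_mem_natConstraint {J : E × F → ℝ}
    (hJ : ∀ u, J u = 1 / 2 * ‖u.1‖ ^ 2 - I u) {w : E × F} (hI : DifferentiableAt ℝ I w)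
    (hw : w ∈ NatConstraint I) (v : F) : fderiv ℝ J w (0, v) = 0 := by
  have hQ : HasFDerivAt (fun u : E × F => 1 / 2 * ‖u.1‖ ^ 2)
      ((1 / 2 : ℝ) • (2 • innerSL ℝ w.1).comp (ContinuousLinearMap.fst ℝ E F)) w :=
    ((hasStrictFDerivAt_norm_sq w.1).hasFDerivAt.comp w hasFDerivAt_fst).const_mul _
  rw [((hQ.sub hI.hasFDerivAt).congr_of_eventuallyEq (.of_forall hJ)).fderiv]
  simpa using hw v

theorem contDiff_of_eq_half_norm_sq_sub {J : E × F → ℝ}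
    (hJ : ∀ u, J u = 1 / 2 * ‖u.1‖ ^ 2 - I u) (hI : ContDiff ℝ 1 I) : ContDiff ℝ 1 J := by
  rw [show J = _ from funext hJ]
  exact (contDiff_const.mul ((contDiff_norm_sq ℝ).comp contDiff_fst)).sub hI

end NatConstraint

theorem continuous_of_fiberwise_strict_min {E F : Type*} [NormedAddCommGroup E]
    [NormedAddCommGroup F] [NormedSpace ℝ F] {I : E × F → ℝ}
    (hF : Function.Surjective (NormedSpace.inclusionInDoubleDual ℝ F))
    (hI : Continuous I) (hI0 : ∀ w, 0 ≤ I w)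
    (hA2 : ∀ (u : ℕ → E × F) (l : E × F), TConv u l →
      I l ≤ liminf (fun n => I (u n)) atTop)
    (hA3 : ∀ (u : ℕ → E × F) (l : E × F), TConv u l →
      Tendsto (fun n => I (u n)) atTop (𝓝 (I l)) → Tendsto u atTop (𝓝 l))
    (hB1 : ∀ u : ℕ → E × F, Tendsto (fun n => ‖u n‖) atTop atTop →
      Tendsto (fun n => ‖(u n).1‖ + I (u n)) atTop atTop)
    {m : E → E × F} (hmfst : ∀ h, (m h).1 = h) (hmin : ∀ w, w ≠ m w.1 → I (m w.1) < I w) :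
    Continuous m := by
  have hmin' : ∀ w, I (m w.1) ≤ I w := fun w => by
    rcases eq_or_ne w (m w.1) with hw | hw
    · exact hw ▸ le_rfl
    · exact (hmin w hw).le
  refine continuous_iff_continuousAt.2 fun h => tendsto_of_subseq_tendsto fun hs hhs => ?_
  have ha : Tendsto (fun n => I (hs n, (m h).2)) atTop (𝓝 (I (m h))) := by
    have := (hI.tendsto _).comp (hhs.prodMk_nhds (tendsto_const_nhds (x := (m h).2)))
    rwa [show ((h, (m h).2) : E × F) = m h from Prod.ext (hmfst h).symm rfl] at this
  have hle : ∀ n, I (m (hs n)) ≤ I (hs n, (m h).2) := fun n => hmin' (hs n, (m h).2)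
  obtain ⟨Bh, hBh⟩ := hhs.norm.bddAbove_range
  obtain ⟨Ba, hBa⟩ := ha.bddAbove_range
  obtain ⟨C, hC⟩ := exists_norm_le_of_tendsto_atTop_of_le
    (g := fun w => ‖w.1‖ + I w) hB1 (w := fun n => m (hs n)) (B := Bh + Ba) fun n => by
      rw [hmfst]
      exact add_le_add (hBh ⟨n, rfl⟩) ((hle n).trans (hBa ⟨n, rfl⟩))
  obtain ⟨ψ, l, hψ, hl⟩ := exists_subseq_weakly_tendsto hF (x := fun n => (m (hs n)).2)
    fun n => (norm_snd_le _).trans (hC n)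
  have hT : TConv (fun n => m (hs (ψ n))) (h, l) :=
    ⟨by simp only [hmfst]; exact hhs.comp hψ.tendsto_atTop, hl⟩
  have hlim : Tendsto (fun n => I (m (hs (ψ n)))) atTop (𝓝 (I (h, l))) :=
    tendsto_of_le_liminf_of_le_tendsto (isBoundedUnder_of ⟨0, fun n => hI0 _⟩)
      (fun n => hle (ψ n)) (ha.comp hψ.tendsto_atTop) (hA2 _ _ hT) (hmin' (h, l))
  have hhl : (h, l) = m h := by
    by_contra hne
    have := le_of_tendsto_of_tendsto' hlim (ha.comp hψ.tendsto_atTop) fun n => hle (ψ n)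
    exact (hmin (h, l) hne).not_ge this
  exact ⟨ψ, hhl ▸ hA3 _ _ hT hlim⟩

theorem statement11_general
    (I J : H × W → ℝ)
    (hWrefl : Function.Surjective (NormedSpace.inclusionInDoubleDual ℝ W))
    (hJ : ∀ u : H × W, J u = 1 / 2 * ‖u.1‖ ^ 2 - I u)
    -- (A1)
    (hIC1 : ContDiff ℝ 1 I) (hA1 : ∀ u : H × W, 0 ≤ I u)
    -- (A2)
    (hA2 : ∀ (u : ℕ → H × W) (l : H × W), TConv u l →
      I l ≤ Filter.liminf (fun n => I (u n)) atTop)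
    -- (A3)
    (hA3 : ∀ (u : ℕ → H × W) (l : H × W), TConv u l →
      Tendsto (fun n => I (u n)) atTop (𝓝 (I l)) → Tendsto u atTop (𝓝 l))
    -- (B1)
    (hB1 : ∀ u : ℕ → H × W, Tendsto (fun n => ‖u n‖) atTop atTop →
      Tendsto (fun n => ‖(u n).1‖ + I (u n)) atTop atTop)
    -- (B4)
    (hB4 : ∀ u ∈ NatConstraint I, ∀ v : W, v ≠ 0 → I u < I (u + ((0 : H), v)))
    -- `m(h)` is the unique point of `M` above `h ∈ X⁺`
    (m : H → H × W)
    (hm : ∀ h : H, (m h ∈ NatConstraint I ∧ (m h).1 = h) ∧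
      ∀ w : H × W, w ∈ NatConstraint I ∧ w.1 = h → w = m h) :
    -- (iv)
    (∀ u : ℕ → H,
      ((∃ c : ℝ, Tendsto (fun n => J (m (u n))) atTop (𝓝 c)) ∧
        Tendsto (fun n => ‖fderiv ℝ (fun h : H => J (m h)) (u n)‖) atTop (𝓝 0)) ↔
      ((∀ n, m (u n) ∈ NatConstraint I) ∧
        (∃ c : ℝ, Tendsto (fun n => J (m (u n))) atTop (𝓝 c)) ∧
        Tendsto (fun n => ‖fderiv ℝ J (m (u n))‖) atTop (𝓝 0))) ∧
    -- (v)
    (∀ u : H, fderiv ℝ (fun h : H => J (m h)) u = 0 ↔ fderiv ℝ J (m u) = 0) ∧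
    -- (vi)
    ((∀ w : H × W, J (-w) = J w) → ∀ h : H, J (m (-h)) = J (m h)) := by
  have hmM : ∀ h, m h ∈ NatConstraint I := fun h => (hm h).1.1
  have hmfst : ∀ h, (m h).1 = h := fun h => (hm h).1.2
  have hI : Differentiable ℝ I := hIC1.differentiable one_ne_zero
  have hJM : ∀ h (v : W), fderiv ℝ J (m h) (0, v) = 0 := fun h =>
    fderiv_apply_inr_eq_zero_of_mem_natConstraint hJ (hI _) (hmM h)
  have hmcont : Continuous m := continuous_of_fiberwise_strict_min hWrefl hIC1.continuous hA1 hA2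
    hA3 hB1 hmfst fun w hw => lt_of_ne_of_mem_natConstraint hB4 (hmM w.1) (hmfst w.1).symm hw
  have hJle : ∀ x y, J (m x + ContinuousLinearMap.inl ℝ H W (y - x)) ≤ J (m y) := fun x y =>
    le_of_mem_natConstraint_of_eq_half_norm_sq_sub hJ hB4 (hmM y) (by simp [hmfst])
  have hD : ∀ u, HasFDerivAt (fun h => J (m h)) ((fderiv ℝ J (m u)).comp (.inl ℝ H W)) u :=
    fun u => ((contDiff_of_eq_half_norm_sq_sub hJ hIC1).contDiffAt.hasStrictFDerivAt
      one_ne_zero).hasFDerivAt_comp_of_le hmcont.continuousAt hJle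
  have hnorm : ∀ u, ‖fderiv ℝ (fun h => J (m h)) u‖ = ‖fderiv ℝ J (m u)‖ := fun u => by
    rw [(hD u).fderiv]
    exact (fderiv ℝ J (m u)).norm_comp_inl_of_apply_inr (hJM u)
  refine ⟨fun u => ?_, fun u => ?_, fun hJeven h => ?_⟩
  · simp only [hnorm]
    exact ⟨fun hPS => ⟨fun n => hmM _, hPS⟩, fun hPS => hPS.2⟩
  · rw [(hD u).fderiv]
    exact (fderiv ℝ J (m u)).comp_inl_eq_zero_iff_of_apply_inr (hJM u)
  · have hIeven : ∀ w, I (-w) = I w := fun w => by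
      have := hJeven w
      rw [hJ, hJ, Prod.fst_neg, norm_neg] at this
      linarith
    have hneg : -m h = m (-h) :=
      (hm (-h)).2 _ ⟨neg_mem_natConstraint hIeven (hI _) (hmM h), by simp [hmfst]⟩
    rw [← hneg, hJeven]

/-- **Claims (iv), (v), (vi) of Theorem 4.6.** Under (A1)-(A4), (B1), (B2), (B4), with `m(u)`
the unique point of `M` above `u ∈ X⁺`: a sequence in `X⁺` is a Palais–Smale sequence for
`J ∘ m` iff its image under `m` is a Palais–Smale sequence for `J` contained in `M`; `u` is a
critical point of `J ∘ m` iff `m(u)` is a critical point of `J`; and if `J` is even so is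
`J ∘ m`. -/
theorem statement11
    (I J : H × W → ℝ)
    (hWrefl : Function.Surjective (NormedSpace.inclusionInDoubleDual ℝ W))
    (hJ : ∀ u : H × W, J u = 1 / 2 * ‖u.1‖ ^ 2 - I u)
    -- (A1)
    (hIC1 : ContDiff ℝ 1 I) (hA1 : ∀ u : H × W, 0 ≤ I u) (hI0 : I 0 = 0)
    -- (A2)
    (hA2 : ∀ (u : ℕ → H × W) (l : H × W), TConv u l →
      I l ≤ Filter.liminf (fun n => I (u n)) atTop)
    -- (A3)
    (hA3 : ∀ (u : ℕ → H × W) (l : H × W), TConv u l →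
      Tendsto (fun n => I (u n)) atTop (𝓝 (I l)) → Tendsto u atTop (𝓝 l))
    -- (A4)
    (r a : ℝ) (hr : 0 < r)
    (ha : a = sInf {c : ℝ | ∃ h : H, ‖h‖ = r ∧ c = J (h, (0 : W))}) (hapos : 0 < a)
    -- (B1)
    (hB1 : ∀ u : ℕ → H × W, Tendsto (fun n => ‖u n‖) atTop atTop →
      Tendsto (fun n => ‖(u n).1‖ + I (u n)) atTop atTop)
    -- (B2)
    (hB2 : ∀ (t : ℕ → ℝ) (u : ℕ → H × W) (u₀ : H), u₀ ≠ 0 → Tendsto t atTop atTop →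
      Tendsto (fun n => (u n).1) atTop (𝓝 u₀) →
      Tendsto (fun n => I (t n • u n) / t n ^ 2) atTop atTop)
    -- (B4)
    (hB4 : ∀ u ∈ NatConstraint I, ∀ v : W, v ≠ 0 → I u < I (u + ((0 : H), v)))
    -- `m(h)` is the unique point of `M` above `h ∈ X⁺`
    (m : H → H × W)
    (hm : ∀ h : H, (m h ∈ NatConstraint I ∧ (m h).1 = h) ∧
      ∀ w : H × W, w ∈ NatConstraint I ∧ w.1 = h → w = m h) :
    -- (iv)
    (∀ u : ℕ → H,
      ((∃ c : ℝ, Tendsto (fun n => J (m (u n))) atTop (𝓝 c)) ∧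
        Tendsto (fun n => ‖fderiv ℝ (fun h : H => J (m h)) (u n)‖) atTop (𝓝 0)) ↔
      ((∀ n, m (u n) ∈ NatConstraint I) ∧
        (∃ c : ℝ, Tendsto (fun n => J (m (u n))) atTop (𝓝 c)) ∧
        Tendsto (fun n => ‖fderiv ℝ J (m (u n))‖) atTop (𝓝 0))) ∧
    -- (v)
    (∀ u : H, fderiv ℝ (fun h : H => J (m h)) u = 0 ↔ fderiv ℝ J (m u) = 0) ∧
    -- (vi)
    ((∀ w : H × W, J (-w) = J w) → ∀ h : H, J (m (-h)) = J (m h)) :=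
  statement11_general I J hWrefl hJ hIC1 hA1 hA2 hA3 hB1 hB4 m hm
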